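/- arXiv:1209.5571 — 3 statements merged into one kernel-verified Lean document; each statement's English description precedes it below -/
import Mathlib

section
/- A graph G = (V, E) is 3-colourable if and only if there exists a function t : V → {1, 2, 3} such that t(v) ≠ t(w) whenever (v, w) ∈ E; equivalently, the temporal formula φ_G (asserting: a marker p_i holds from time i onwards for i = 0..4 via p_0 ∧ ⋀_{i=0}^{3} □*(p_i → □F p_{i+1}); each vertex variable v_i holds at some time point among {1,2,3} via □*(p_0 ∧ □F ¬v_i → ⊥) and □*(p_4 ∧ v_i → ⊥); and adjacent vertex variables never hold simultaneously via □*(v_i ∧ v_j → ⊥) for each edge) is satisfiable at time 0 in some model over (ℤ, <). -/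
/-- A finite graph `G = (V,E)` is 3-colourable iff the temporal formula `φ_G` is
satisfiable at time 0 over `(ℤ,<)`: the formula asserts `p₀` at 0,
`□*(pᵢ → □F pᵢ₊₁)` for `i = 0..3`, `□*(p₀ ∧ □F ¬vᵢ → ⊥)` and `□*(p₄ ∧ vᵢ → ⊥)`
for every vertex, and `□*(vᵢ ∧ vⱼ → ⊥)` for every edge. -/
theorem stmt7 {Vtx : Type} [Fintype Vtx] (E : Vtx → Vtx → Prop)
    (hsym : ∀ v w, E v w → E w v) :
    (∃ c : Vtx → Fin 3, ∀ v w, E v w → c v ≠ c w) ↔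
      (∃ M : ℤ → (Fin 5 ⊕ Vtx) → Bool,
        M 0 (Sum.inl 0) = true ∧
        (∀ i : Fin 4, ∀ n : ℤ, M n (Sum.inl i.castSucc) = true →
          ∀ m : ℤ, n < m → M m (Sum.inl i.succ) = true) ∧
        (∀ v : Vtx, ∀ n : ℤ,
          ¬ (M n (Sum.inl 0) = true ∧ ∀ m : ℤ, n < m → M m (Sum.inr v) = false)) ∧
        (∀ v : Vtx, ∀ n : ℤ, ¬ (M n (Sum.inl 4) = true ∧ M n (Sum.inr v) = true)) ∧
        (∀ v w : Vtx, E v w →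
          ∀ n : ℤ, ¬ (M n (Sum.inr v) = true ∧ M n (Sum.inr w) = true))) := by
  constructor
  · rintro ⟨c, hc⟩
    refine ⟨fun n x => match x with
      | Sum.inl i => if i.val = 0 then decide (n = 0) else decide ((i.val : ℤ) ≤ n)
      | Sum.inr v => decide (n = ((c v).val : ℤ) + 1), ?_, ?_, ?_, ?_, ?_⟩
    · simp
    · intro i n h m hm
      simp only [decide_eq_true_eq] at h ⊢
      have hcs : i.castSucc.val = i.val := rfl
      have hss : i.succ.val = i.val + 1 := rfl
      rw [hcs] at h
      rw [hss]
      rcases Nat.eq_zero_or_pos i.val with h0 | h0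
      · simp only [h0, if_true, decide_eq_true_eq] at h
        simp only [h0]
        norm_num
        omega
      · rw [if_neg (by omega)] at h
        rw [if_neg (by omega)]
        simp only [decide_eq_true_eq] at h ⊢
        push_cast
        omega
    · rintro v n ⟨h0, hall⟩
      simp only [Fin.val_zero, if_true, decide_eq_true_eq] at h0
      have h1 := hall (((c v).val : ℤ) + 1) (by omega)
      simp at h1
    · rintro v n ⟨h4, hv⟩
      simp only [decide_eq_true_eq] at hv
      have h4' : (if ((4:Fin 5).val = 0) then decide (n = 0) else decide (((4:Fin 5).val : ℤ) ≤ n)) = true := h4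
      have hval : (4:Fin 5).val = 4 := rfl
      rw [hval] at h4'
      rw [if_neg (by norm_num)] at h4'
      rw [decide_eq_true_eq] at h4'
      norm_num at h4
      have := (c v).isLt
      omega
    · rintro v w hvw n ⟨hv, hw⟩
      simp only [decide_eq_true_eq] at hv hw
      exact hc v w hvw (Fin.ext (by omega))
  · rintro ⟨M, h0, hchain, hvtx, h4, hE⟩
    have h1 : ∀ m : ℤ, 0 < m → M m (Sum.inl 1) = true := fun m hm =>
      hchain 0 0 h0 m hm
    have h2 : ∀ m : ℤ, 1 < m → M m (Sum.inl 2) = true := fun m hm =>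
      hchain 1 1 (h1 1 one_pos) m hm
    have h3 : ∀ m : ℤ, 2 < m → M m (Sum.inl 3) = true := fun m hm =>
      hchain 2 2 (h2 2 one_lt_two) m hm
    have h4' : ∀ m : ℤ, 3 < m → M m (Sum.inl 4) = true := fun m hm =>
      hchain 3 3 (h3 3 (by norm_num)) m hm
    have key : ∀ v : Vtx, ∃ m : ℤ, 0 < m ∧ m < 4 ∧ M m (Sum.inr v) = true := by
      intro v
      have := hvtx v 0
      push_neg at this
      obtain ⟨m, hm, hMm⟩ := this h0
      refine ⟨m, hm, ?_, by simpa using hMm⟩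
      by_contra hge
      exact h4 v m ⟨h4' m (by omega), by simpa using hMm⟩
    choose f hf1 hf2 hf3 using key
    refine ⟨fun v => ⟨(f v - 1).toNat, by have := hf1 v; have := hf2 v; omega⟩, ?_⟩
    intro v w hvw heq
    have : f v = f w := by
      have := Fin.mk.injEq _ _ _ _ ▸ heq
      have h1 := hf1 v; have h2 := hf1 w
      simp only [Fin.mk.injEq] at heq
      omega
    exact hE v w hvw (f v) ⟨hf3 v, this ▸ hf3 w⟩
end

section
/- Every propositional Horn formula f with at most ternary clauses over variables p_1,...,p_m is satisfiable if and only if the conjunction φ_f of the following temporal formulas is satisfiable at time 0 over (ℤ,<): p for each unit clause p; p → ⊥ for each clause ¬p; p → q for each clause p → q; and for each clause p ∧ q → r (with fresh variable c for that clause) the formulas c, p → □F c, q → □P c, and □* c → r, where □F, □P are strict future/past 'always' operators and □* c means c holds at all integers. -/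
/-!
A temporal model restricted to time 0 satisfies `f`: the fresh variable `c` of a clause
`p ∧ q → r` holds now, and `p`, `q` spread it over the whole future and past, so `□* c`
and hence `r` follow. Conversely, an assignment `σ` satisfying `f` becomes a temporal model
that is constant in the original variables, with `c` true at time 0, true in the future iff
`p` holds and true in the past iff `q` holds; then `□* c` holds exactly when `p ∧ q` does.
-/

/-- Horn clauses with at most three literals: `p`, `¬p`, `p → q`, `p ∧ q → r`. -/
inductive HClause (m : ℕ) where
  | pos : Fin m → HClause m
  | neg : Fin m → HClause m
  | imp : Fin m → Fin m → HClause m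
  | tern : Fin m → Fin m → Fin m → HClause m

/-- Propositional evaluation of a Horn clause under an assignment. -/
def evalC {m : ℕ} (σ : Fin m → Bool) : HClause m → Prop
  | .pos p => σ p = true
  | .neg p => σ p = false
  | .imp p q => σ p = true → σ q = true
  | .tern p q r => σ p = true → σ q = true → σ r = true

/-- The temporal translation of the `i`-th clause (with fresh variable `Sum.inr i` for
a ternary clause): `p`; `p → ⊥`; `p → q`; and for `p ∧ q → r` the conjunction
`c ∧ (p → □F c) ∧ (q → □P c) ∧ (□* c → r)`, all asserted at time 0. -/
def tempC {m : ℕ} (len : ℕ) (M : ℤ → (Fin m ⊕ Fin len) → Bool) (i : Fin len) :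
    HClause m → Prop
  | .pos p => M 0 (Sum.inl p) = true
  | .neg p => M 0 (Sum.inl p) = false
  | .imp p q => M 0 (Sum.inl p) = true → M 0 (Sum.inl q) = true
  | .tern p q r =>
      M 0 (Sum.inr i) = true ∧
      (M 0 (Sum.inl p) = true → ∀ k : ℤ, 0 < k → M k (Sum.inr i) = true) ∧
      (M 0 (Sum.inl q) = true → ∀ k : ℤ, k < 0 → M k (Sum.inr i) = true) ∧
      ((∀ k : ℤ, M k (Sum.inr i) = true) → M 0 (Sum.inl r) = true)

def freshVal {m : ℕ} (σ : Fin m → Bool) : HClause m → ℤ → Bool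
  | .tern p q _, k => if k = 0 then true else if 0 < k then σ p else σ q
  | _, _ => true

def translationModel {m : ℕ} (σ : Fin m → Bool) (f : List (HClause m)) :
    ℤ → (Fin m ⊕ Fin f.length) → Bool :=
  fun k => Sum.elim σ fun i => freshVal σ (f.get i) k

section

variable {m len : ℕ}

lemma tempC_of_evalC (σ : Fin m → Bool) (M : ℤ → (Fin m ⊕ Fin len) → Bool) (i : Fin len)
    (C : HClause m) (hσ : ∀ p, M 0 (.inl p) = σ p) (hc : ∀ k, M k (.inr i) = freshVal σ C k)
    (h : evalC σ C) : tempC len M i C := by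
  cases C with
  | pos p => simpa [tempC, evalC, hσ] using h
  | neg p => simpa [tempC, evalC, hσ] using h
  | imp p q => simpa [tempC, evalC, hσ] using h
  | tern p q r =>
    refine ⟨by simp [hc, freshVal], ?_, ?_, ?_⟩
    · intro hp k hk
      simpa [hc, freshVal, hk.ne', hk, ← hσ] using hp
    · intro hq k hk
      simpa [hc, freshVal, hk.ne, hk.not_gt, ← hσ] using hq
    · intro hall
      have hp : σ p = true := by simpa [hc, freshVal] using hall 1
      have hq : σ q = true := by simpa [hc, freshVal] using hall (-1)
      simpa [hσ] using h hp hq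

lemma evalC_of_tempC (M : ℤ → (Fin m ⊕ Fin len) → Bool) (i : Fin len) (C : HClause m)
    (h : tempC len M i C) : evalC (fun p => M 0 (.inl p)) C := by
  cases C with
  | pos p => exact h
  | neg p => exact h
  | imp p q => exact h
  | tern p q r =>
    obtain ⟨hnow, hfuture, hpast, halways⟩ := h
    intro hp hq
    refine halways fun k => ?_
    rcases lt_trichotomy k 0 with hk | rfl | hk
    · exact hpast hq k hk
    · exact hnow
    · exact hfuture hp k hk

end

/-- A propositional Horn formula with at most ternary clauses is satisfiable iff its
temporal translation `φ_f` is satisfiable at time 0 over `(ℤ,<)`. -/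
theorem stmt8 (m : ℕ) (f : List (HClause m)) :
    (∃ σ : Fin m → Bool, ∀ C ∈ f, evalC σ C) ↔
      (∃ M : ℤ → (Fin m ⊕ Fin f.length) → Bool,
        ∀ i : Fin f.length, tempC f.length M i (f.get i)) := by
  constructor
  · rintro ⟨σ, hσ⟩
    exact ⟨translationModel σ f, fun i =>
      tempC_of_evalC σ _ i _ (fun _ => rfl) (fun _ => rfl) (hσ _ (List.get_mem f i))⟩
  · rintro ⟨M, hM⟩
    refine ⟨fun p => M 0 (.inl p), fun C hC => ?_⟩
    obtain ⟨i, rfl⟩ := List.get_of_mem hC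
    exact evalC_of_tempC M i _ (hM i)
end

section
/- Let M be a first-order temporal model over (ℤ,<) with constant domain Δ satisfying a sentence of the form □*∀x φ(x) ∧ ψ, where φ(x) is quantifier-free with only unary predicates and one free variable x, and ψ is variable-free (built from ground atoms over constants). Suppose d ∈ Δ. Define M' with domain Δ ⊔ ({d} × ℤ) by interpreting each unary predicate B at time n as B^{M,n} ∪ {(d,k) : d ∈ B^{M, n−k}} and keeping constants interpreted in Δ as in M. Then M', 0 also satisfies □*∀x φ(x) ∧ ψ, and for every n ∈ ℤ and every unary predicate B, (d, k) ∈ B^{M', n} iff d ∈ B^{M, n−k}. -/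
/-- Quantifier-free one-variable first-order temporal formulas over unary
predicates `P`, with strict `until` and `since`. -/
inductive QFF (P : Type) where
  | atom : P → QFF P
  | bot : QFF P
  | neg : QFF P → QFF P
  | conj : QFF P → QFF P → QFF P
  | untl : QFF P → QFF P → QFF P
  | snce : QFF P → QFF P → QFF P

/-- Satisfaction of a one-variable formula at time `n` by a domain element `x`. -/
def SatQ {P Δ : Type} (M : ℤ → P → Δ → Prop) : ℤ → Δ → QFF P → Prop
  | n, x, .atom p => M n p x
  | _, _, .bot => False
  | n, x, .neg φ => ¬ SatQ M n x φ
  | n, x, .conj φ ψ => SatQ M n x φ ∧ SatQ M n x ψ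
  | n, x, .untl φ ψ => ∃ k, n < k ∧ SatQ M k x ψ ∧ ∀ m, n < m → m < k → SatQ M m x φ
  | n, x, .snce φ ψ => ∃ k, k < n ∧ SatQ M k x ψ ∧ ∀ m, k < m → m < n → SatQ M m x φ

/-- Variable-free temporal formulas built from ground atoms over constants `C`. -/
inductive GF (P C : Type) where
  | atom : P → C → GF P C
  | bot : GF P C
  | neg : GF P C → GF P C
  | conj : GF P C → GF P C → GF P C
  | untl : GF P C → GF P C → GF P C
  | snce : GF P C → GF P C → GF P C

/-- Satisfaction of a ground formula at time `n`, with constants interpreted rigidly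
via `ι`. -/
def SatG {P C Δ : Type} (M : ℤ → P → Δ → Prop) (ι : C → Δ) : ℤ → GF P C → Prop
  | n, .atom p c => M n p (ι c)
  | _, .bot => False
  | n, .neg φ => ¬ SatG M ι n φ
  | n, .conj φ ψ => SatG M ι n φ ∧ SatG M ι n ψ
  | n, .untl φ ψ => ∃ k, n < k ∧ SatG M ι k ψ ∧ ∀ m, n < m → m < k → SatG M ι m φ
  | n, .snce φ ψ => ∃ k, k < n ∧ SatG M ι k ψ ∧ ∀ m, k < m → m < n → SatG M ι m φ

lemma satQ_inl {P Δ : Type} (M : ℤ → P → Δ → Prop) (M' : ℤ → P → (Δ ⊕ ℤ) → Prop)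
    (hM'l : ∀ n B (x : Δ), M' n B (Sum.inl x) ↔ M n B x) (x : Δ) :
    ∀ (φ : QFF P) (n : ℤ), SatQ M' n (Sum.inl x) φ ↔ SatQ M n x φ := by
  intro φ
  induction φ with
  | atom p => intro n; exact hM'l n p x
  | bot => intro n; rfl
  | neg φ ih => intro n; simp [SatQ, ih]
  | conj φ ψ ih1 ih2 => intro n; simp [SatQ, ih1, ih2]
  | untl φ ψ ih1 ih2 => intro n; simp only [SatQ, ih1, ih2]
  | snce φ ψ ih1 ih2 => intro n; simp only [SatQ, ih1, ih2]

lemma satQ_inr {P Δ : Type} (M : ℤ → P → Δ → Prop) (M' : ℤ → P → (Δ ⊕ ℤ) → Prop) (d : Δ)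
    (hM'r : ∀ n B (k : ℤ), M' n B (Sum.inr k) ↔ M (n - k) B d) (k : ℤ) :
    ∀ (φ : QFF P) (n : ℤ), SatQ M' n (Sum.inr k) φ ↔ SatQ M (n - k) d φ := by
  intro φ
  induction φ with
  | atom p => intro n; exact hM'r n p k
  | bot => intro n; rfl
  | neg φ ih => intro n; simp [SatQ, ih]
  | conj φ ψ ih1 ih2 => intro n; simp [SatQ, ih1, ih2]
  | untl φ ψ ih1 ih2 =>
      intro n
      constructor
      · rintro ⟨j, hj, hψ, hφ⟩
        exact ⟨j - k, by omega, (ih2 j).mp hψ, fun m h1 h2 => by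
          have := hφ (m + k) (by omega) (by omega)
          rw [ih1] at this; simpa using this⟩
      · rintro ⟨j, hj, hψ, hφ⟩
        exact ⟨j + k, by omega, (ih2 (j + k)).mpr (by simpa using hψ), fun m h1 h2 => by
          rw [ih1]; exact hφ (m - k) (by omega) (by omega)⟩
  | snce φ ψ ih1 ih2 =>
      intro n
      constructor
      · rintro ⟨j, hj, hψ, hφ⟩
        exact ⟨j - k, by omega, (ih2 j).mp hψ, fun m h1 h2 => by
          have := hφ (m + k) (by omega) (by omega)
          rw [ih1] at this; simpa using this⟩
      · rintro ⟨j, hj, hψ, hφ⟩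
        exact ⟨j + k, by omega, (ih2 (j + k)).mpr (by simpa using hψ), fun m h1 h2 => by
          rw [ih1]; exact hφ (m - k) (by omega) (by omega)⟩

lemma satG_inl {P C Δ : Type} (M : ℤ → P → Δ → Prop) (ι : C → Δ)
    (M' : ℤ → P → (Δ ⊕ ℤ) → Prop)
    (hM'l : ∀ n B (x : Δ), M' n B (Sum.inl x) ↔ M n B x) :
    ∀ (ψ : GF P C) (n : ℤ),
      SatG M' (fun c => Sum.inl (ι c)) n ψ ↔ SatG M ι n ψ := by
  intro ψ
  induction ψ with
  | atom p c => intro n; exact hM'l n p (ι c)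
  | bot => intro n; rfl
  | neg φ ih => intro n; simp [SatG, ih]
  | conj φ ψ ih1 ih2 => intro n; simp [SatG, ih1, ih2]
  | untl φ ψ ih1 ih2 => intro n; simp only [SatG, ih1, ih2]
  | snce φ ψ ih1 ih2 => intro n; simp only [SatG, ih1, ih2]

/-- Adding shifted copies of an element preserves `□*∀x φ(x) ∧ ψ`: if `M, 0` satisfies
`□*∀x φ(x) ∧ ψ` and `M'` on domain `Δ ⊕ ℤ` interprets each unary predicate `B` at
time `n` as `B^{M,n}` on `inl`-elements and puts the copy `(d,k)` (encoded `inr k`)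
into `B` at `n` iff `d ∈ B^{M,n-k}`, then `M', 0` also satisfies `□*∀x φ(x) ∧ ψ`,
and moreover `(d,k) ∈ B^{M',n}` iff `d ∈ B^{M,n-k}`. -/
theorem stmt9 {P C Δ : Type} (M : ℤ → P → Δ → Prop) (ι : C → Δ)
    (φ : QFF P) (ψ : GF P C) (d : Δ)
    (hφ : ∀ n : ℤ, ∀ x : Δ, SatQ M n x φ) (hψ : SatG M ι 0 ψ)
    (M' : ℤ → P → (Δ ⊕ ℤ) → Prop)
    (hM'l : ∀ n B (x : Δ), M' n B (Sum.inl x) ↔ M n B x)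
    (hM'r : ∀ n B (k : ℤ), M' n B (Sum.inr k) ↔ M (n - k) B d) :
    (∀ n : ℤ, ∀ y : Δ ⊕ ℤ, SatQ M' n y φ) ∧
    SatG M' (fun c => Sum.inl (ι c)) 0 ψ ∧
    (∀ n k : ℤ, ∀ B : P, M' n B (Sum.inr k) ↔ M (n - k) B d) := by
  refine ⟨?_, (satG_inl M ι M' hM'l ψ 0).mpr hψ, fun n k B => hM'r n B k⟩
  rintro n (x | k)
  · exact (satQ_inl M M' hM'l x φ n).mpr (hφ n x)
  · exact (satQ_inr M M' d hM'r k φ n).mpr (hφ (n - k) d)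
end
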